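/- arXiv:1009.0507 — 3 statements merged into one kernel-verified Lean document; each statement's English description precedes it below -/
import Mathlib

section
/- There exists a probability space and σ-fields for which the exchange of countable intersection and supremum fails: with (ξ_k)_{k∈ℤ} i.i.d. Bernoulli(1/2) and Y_n = |ξ_n − ξ_{n−1}|, the σ-field ⋂_{n≤0}(σ{Y_k : k≤0} ∨ σ{ξ_k : k≤n}) strictly contains (up to null sets) σ{Y_k : k≤0} ∨ ⋂_{n≤0}σ{ξ_k : k≤n}. -/
open MeasureTheory ProbabilityTheory
open scoped symmDiff

/-!
Let `A = {ξ₀ odd}`. Since `ξ₀ ≡ ξₙ + ∑_{n < k ≤ 0} Y_k (mod 2)`, the set `A` lies in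
`σ{Y_k : k ≤ 0} ∨ σ{ξ_k : k ≤ n}` for every `n`. On the other hand the tail σ-field is trivial,
so every set of `σ{Y_k : k ≤ 0} ∨ tail` is a.e. equal to a set `C` of `σ{Y_k : k ≤ 0}`.
Flipping all coins, `ξ ↦ 1 - ξ`, preserves the law of `(ξ_k)` and every `Y_k` but exchanges `A`
with its complement, so `P(A ∩ C) = P(Aᶜ ∩ C)`; this is impossible if `A = C` a.e., as `P(A) ≠ 0`.
-/

namespace MeasurableSpace

variable {Ω : Type*} {mΩ : MeasurableSpace Ω}

@[reducible]
def aeClosure (m : MeasurableSpace Ω) (μ : Measure[mΩ] Ω) : MeasurableSpace Ω where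
  MeasurableSet' s := ∃ t, MeasurableSet[m] t ∧ s =ᵐ[μ] t
  measurableSet_empty := ⟨∅, @MeasurableSet.empty _ m, ae_eq_refl _⟩
  measurableSet_compl := fun _ ⟨t, ht, hst⟩ => ⟨tᶜ, ht.compl, hst.compl⟩
  measurableSet_iUnion s hs := by
    choose t ht hst using hs
    exact ⟨⋃ i, t i, .iUnion ht, .countable_iUnion hst⟩

lemma le_aeClosure (m : MeasurableSpace Ω) (μ : Measure[mΩ] Ω) : m ≤ aeClosure m μ :=
  fun s hs => ⟨s, hs, ae_eq_refl _⟩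

lemma sup_le_aeClosure_of_measure_eq_zero_or_one {m₁ m₂ : MeasurableSpace Ω}
    {μ : Measure[mΩ] Ω} [IsProbabilityMeasure μ] (hm₂ : m₂ ≤ mΩ)
    (h : ∀ s, MeasurableSet[m₂] s → μ s = 0 ∨ μ s = 1) : m₁ ⊔ m₂ ≤ aeClosure m₁ μ := by
  refine sup_le (le_aeClosure m₁ μ) fun s hs => ?_
  rcases h s hs with h0 | h1
  · exact ⟨∅, @MeasurableSet.empty _ m₁, ae_eq_empty.2 h0⟩
  · exact ⟨.univ, @MeasurableSet.univ _ m₁,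
      ae_eq_univ.2 ((prob_compl_eq_zero_iff (hm₂ s hs)).2 h1)⟩

end MeasurableSpace

lemma MeasureTheory.MeasurePreserving.measure_inter_eq_measure_compl_inter {α : Type*}
    [MeasurableSpace α] {μ : Measure α} {g : α → α} (hg : MeasurePreserving g μ μ)
    {D E : Set α} (hD : MeasurableSet D) (hgD : g ⁻¹' D = Dᶜ)
    (hE : MeasurableSet[MeasurableSpace.invariants g] E) :
    μ (D ∩ E) = μ (Dᶜ ∩ E) := by
  rw [← hg.measure_preimage (hD.compl.inter hE.1).nullMeasurableSet, Set.preimage_inter,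
    Set.preimage_compl, hgD, hE.2, compl_compl]

lemma measurePreserving_one_sub_infinitePi {ι : Type*} (μ : ι → Measure ℤ)
    [∀ i, IsProbabilityMeasure (μ i)] (hμ : ∀ i, (μ i).map (1 - ·) = μ i) :
    MeasurePreserving (fun (x : ι → ℤ) i => 1 - x i) (Measure.infinitePi μ)
      (Measure.infinitePi μ) where
  measurable := by fun_prop
  map_eq := by
    rw [Measure.infinitePi_map_pi μ fun _ => .of_discrete]
    simp_rw [hμ]

lemma iInf_iSup_le_limsup_atBot {α : Type*} [CompleteLattice α] (u : ℤ → α) :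
    ⨅ n : {m : ℤ // m ≤ 0}, ⨆ k : {k : ℤ // k ≤ n.1}, u k ≤ Filter.limsup u Filter.atBot := by
  rw [Filter.atBot_basis.limsup_eq_iInf_iSup]
  refine le_iInf₂ fun a _ => (iInf_le _ ⟨min a 0, min_le_right a 0⟩).trans (iSup_le fun k => ?_)
  exact le_iSup₂ (f := fun b (_ : b ∈ Set.Iic a) => u b) k.1 (k.2.trans (min_le_left a 0))

lemma modEq_two_add_sum_abs_sub (x : ℤ → ℤ) {n m : ℤ} (h : n ≤ m) :
    x m ≡ x n + ∑ k ∈ Finset.Ioc n m, |x k - x (k - 1)| [ZMOD 2] := by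
  induction m, h using Int.leInduction with
  | base => simp [Int.ModEq]
  | succ m hnm ih =>
    rw [← Finset.insert_Ioc_right_eq_Ioc_add_one hnm, Finset.sum_insert (by simp),
      add_sub_cancel_right]
    unfold Int.ModEq at ih ⊢
    rcases abs_cases (x (m + 1) - x m) with ⟨h, -⟩ | ⟨h, -⟩ <;> omega

lemma measurableSet_odd_increments_sup_past {Ω : Type*} (ξ : ℤ → Ω → ℤ) {n : ℤ} (hn : n ≤ 0) :
    MeasurableSet[(⨆ k : {k : ℤ // k ≤ 0},
        MeasurableSpace.comap (fun ω => |ξ k ω - ξ (k - 1) ω|) inferInstance) ⊔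
      ⨆ k : {k : ℤ // k ≤ n}, MeasurableSpace.comap (ξ k) inferInstance]
      {ω | ξ 0 ω % 2 = 1} := by
  set m := (⨆ k : {k : ℤ // k ≤ 0},
      MeasurableSpace.comap (fun ω => |ξ k ω - ξ (k - 1) ω|) inferInstance) ⊔
    ⨆ k : {k : ℤ // k ≤ n}, MeasurableSpace.comap (ξ k) inferInstance
  have hξn : Measurable[m] (ξ n) :=
    .of_comap_le <| le_sup_of_le_right <| le_iSup_of_le (⟨n, le_rfl⟩ : {k : ℤ // k ≤ n}) le_rfl
  have hinc (k : ℤ) (hk : k ∈ Finset.Ioc n 0) :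
      Measurable[m] fun ω => |ξ k ω - ξ (k - 1) ω| :=
    .of_comap_le <| le_sup_of_le_left <|
      le_iSup_of_le (⟨k, (Finset.mem_Ioc.1 hk).2⟩ : {k : ℤ // k ≤ 0}) le_rfl
  have hparity : Measurable[m]
      fun ω => (ξ n ω + ∑ k ∈ Finset.Ioc n 0, |ξ k ω - ξ (k - 1) ω|) % 2 :=
    (Measurable.of_discrete (f := (· % 2))).comp (hξn.add (Finset.measurable_sum _ hinc))
  convert hparity (measurableSet_singleton 1) using 1
  ext ω
  exact Iff.of_eq (congrArg (· = 1) (modEq_two_add_sum_abs_sub (ξ · ω) hn))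

lemma iSup_comap_abs_sub_le_comap_invariants {Ω : Type*} [MeasurableSpace Ω] (ξ : ℤ → Ω → ℤ) :
    ⨆ k, MeasurableSpace.comap (fun ω => |ξ k ω - ξ (k - 1) ω|) inferInstance ≤
      MeasurableSpace.comap (fun ω k => ξ k ω)
        (MeasurableSpace.invariants fun (x : ℤ → ℤ) k => 1 - x k) := by
  refine iSup_le fun k => ?_
  have hinc : Measurable[MeasurableSpace.invariants fun (x : ℤ → ℤ) k => 1 - x k]
      fun x => |x k - x (k - 1)| := by
    refine MeasurableSpace.measurable_invariants_dom.2 ⟨by fun_prop, fun s _ => ?_⟩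
    congr! 2 with x
    simp only [Function.comp_apply, sub_sub_sub_cancel_left, abs_sub_comm]
  exact MeasurableSpace.comap_le_comap_of_eq_comp _ hinc rfl

section CoinFlips

variable {Ω : Type*} [MeasurableSpace Ω] {P : Measure Ω}

lemma measure_eq_zero_or_one_of_measurableSet_iInf_iSup {β : Type*} [MeasurableSpace β]
    {ξ : ℤ → Ω → β} (hmeas : ∀ k, Measurable (ξ k)) (hindep : iIndepFun ξ P) {D : Set Ω}
    (hD : MeasurableSet[⨅ n : {m : ℤ // m ≤ 0}, ⨆ k : {k : ℤ // k ≤ n.1},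
      MeasurableSpace.comap (ξ k) inferInstance] D) :
    P D = 0 ∨ P D = 1 :=
  measure_zero_or_one_of_measurableSet_limsup_atBot (fun k => (hmeas k).comap_le) hindep
    (iInf_iSup_le_limsup_atBot (fun k => MeasurableSpace.comap (ξ k) inferInstance) D hD)

variable [IsProbabilityMeasure P] {ξ : ℤ → Ω → ℤ}

lemma measure_odd_inter_eq_measure_even_inter (hmeas : ∀ k, Measurable (ξ k))
    (hindep : iIndepFun ξ P) (hflip : ∀ k, (P.map (ξ k)).map (1 - ·) = P.map (ξ k))
    {C : Set Ω} (hC : MeasurableSet[⨆ k,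
      MeasurableSpace.comap (fun ω => |ξ k ω - ξ (k - 1) ω|) inferInstance] C) :
    P ({ω | ξ 0 ω % 2 = 1} ∩ C) = P ({ω | ξ 0 ω % 2 = 1}ᶜ ∩ C) := by
  obtain ⟨E, hE, rfl⟩ := iSup_comap_abs_sub_le_comap_invariants ξ C hC
  have (k : ℤ) : IsProbabilityMeasure (P.map (ξ k)) :=
    Measure.isProbabilityMeasure_map (hmeas k).aemeasurable
  have hX : Measurable fun ω k => ξ k ω := measurable_pi_lambda _ hmeas
  set D : Set (ℤ → ℤ) := {x | x 0 % 2 = 1}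
  have hD : MeasurableSet D := measurableSet_eq_fun (by fun_prop) measurable_const
  have hflipD : (fun (x : ℤ → ℤ) k => 1 - x k) ⁻¹' D = Dᶜ := by
    ext x
    simp only [D, Set.mem_preimage, Set.mem_compl_iff, Set.mem_ofPred_eq]
    omega
  have h := (measurePreserving_one_sub_infinitePi _ hflip).measure_inter_eq_measure_compl_inter
    hD hflipD hE
  rwa [← hindep.map_fun_eq_infinitePi_map hmeas, Measure.map_apply hX (hD.inter hE.1),
    Measure.map_apply hX (hD.compl.inter hE.1)] at h

lemma not_odd_ae_eq_of_measurableSet_increments (hmeas : ∀ k, Measurable (ξ k))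
    (hindep : iIndepFun ξ P) (hflip : ∀ k, (P.map (ξ k)).map (1 - ·) = P.map (ξ k))
    (hodd : P {ω | ξ 0 ω % 2 = 1} ≠ 0) {C : Set Ω} (hC : MeasurableSet[⨆ k,
      MeasurableSpace.comap (fun ω => |ξ k ω - ξ (k - 1) ω|) inferInstance] C) :
    ¬ {ω | ξ 0 ω % 2 = 1} =ᵐ[P] C := by
  set A : Set Ω := {ω | ξ 0 ω % 2 = 1}
  intro hAC
  have hinter : (A ∩ C : Set Ω) =ᵐ[P] A := by
    simpa only [Set.inter_self] using ae_eq_set_inter (ae_eq_refl A) hAC.symm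
  have hcompl : (Aᶜ ∩ C : Set Ω) =ᵐ[P] (∅ : Set Ω) := by
    simpa only [Set.compl_inter_self] using ae_eq_set_inter (ae_eq_refl (Aᶜ : Set Ω)) hAC.symm
  have h := measure_odd_inter_eq_measure_even_inter hmeas hindep hflip hC
  rw [measure_congr hinter, measure_congr hcompl, measure_empty] at h
  exact hodd h

end CoinFlips

/-- A failure of the exchange of countable intersection and supremum of
σ-fields: with (ξ_k) i.i.d. Bernoulli(1/2) and Y_n = |ξ_n − ξ_{n−1}|, the σ-field
⋂_{n≤0}(σ{Y_k : k≤0} ∨ σ{ξ_k : k≤n}) strictly contains, modulo P-null sets,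
σ{Y_k : k≤0} ∨ ⋂_{n≤0}σ{ξ_k : k≤n}. -/
theorem stmt2 {Ω : Type*} [MeasurableSpace Ω] (P : Measure Ω) [IsProbabilityMeasure P]
    (ξ : ℤ → Ω → ℤ) (hmeas : ∀ k, Measurable (ξ k))
    (hindep : iIndepFun ξ P)
    (hlaw : ∀ k, Measure.map (ξ k) P
      = (1/2 : ENNReal) • Measure.dirac (0 : ℤ) + (1/2 : ENNReal) • Measure.dirac (1 : ℤ))
    (Y : ℤ → Ω → ℤ) (hY : ∀ n ω, Y n ω = |ξ n ω - ξ (n-1) ω|) :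
    (((⨆ k : {k : ℤ // k ≤ 0}, MeasurableSpace.comap (Y k.1) inferInstance) ⊔
        ⨅ n : {m : ℤ // m ≤ 0},
          ⨆ k : {k : ℤ // k ≤ n.1}, MeasurableSpace.comap (ξ k.1) inferInstance) ≤
      ⨅ n : {m : ℤ // m ≤ 0},
        ((⨆ k : {k : ℤ // k ≤ 0}, MeasurableSpace.comap (Y k.1) inferInstance) ⊔
         (⨆ k : {k : ℤ // k ≤ n.1}, MeasurableSpace.comap (ξ k.1) inferInstance))) ∧
    ∃ A : Set Ω,
      MeasurableSet[⨅ n : {m : ℤ // m ≤ 0},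
        ((⨆ k : {k : ℤ // k ≤ 0}, MeasurableSpace.comap (Y k.1) inferInstance) ⊔
         (⨆ k : {k : ℤ // k ≤ n.1}, MeasurableSpace.comap (ξ k.1) inferInstance))] A ∧
      ∀ B : Set Ω,
        MeasurableSet[(⨆ k : {k : ℤ // k ≤ 0}, MeasurableSpace.comap (Y k.1) inferInstance) ⊔
          ⨅ n : {m : ℤ // m ≤ 0},
            ⨆ k : {k : ℤ // k ≤ n.1}, MeasurableSpace.comap (ξ k.1) inferInstance] B →
        P (A ∆ B) ≠ 0 := by
  obtain rfl : Y = fun n ω => |ξ n ω - ξ (n - 1) ω| := funext fun n => funext (hY n)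
  have hflip (k : ℤ) : (P.map (ξ k)).map (1 - ·) = P.map (ξ k) := by
    rw [hlaw k, Measure.map_add _ _ .of_discrete, Measure.map_smul, Measure.map_smul,
      Measure.map_dirac' .of_discrete, Measure.map_dirac' .of_discrete]
    norm_num [add_comm]
  have hodd : P (ξ 0 ⁻¹' {z | z % 2 = 1}) ≠ 0 := by
    rw [← Measure.map_apply (hmeas 0) .of_discrete, hlaw 0]
    simp
  refine ⟨le_iInf fun n => sup_le_sup_left (iInf_le _ n) _, {ω | ξ 0 ω % 2 = 1},
    MeasurableSpace.measurableSet_iInf.2 fun n => measurableSet_odd_increments_sup_past ξ n.2,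
    fun B hB hAB => ?_⟩
  have htail_le : (⨅ n : {m : ℤ // m ≤ 0}, ⨆ k : {k : ℤ // k ≤ n.1},
      MeasurableSpace.comap (ξ k.1) inferInstance) ≤ ‹MeasurableSpace Ω› :=
    iInf_le_of_le ⟨0, le_rfl⟩ (iSup_le fun k => (hmeas k).comap_le)
  obtain ⟨C, hC, hBC⟩ := MeasurableSpace.sup_le_aeClosure_of_measure_eq_zero_or_one htail_le
    (fun _ => measure_eq_zero_or_one_of_measurableSet_iInf_iSup hmeas hindep) B hB
  exact not_odd_ae_eq_of_measurableSet_increments hmeas hindep hflip hodd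
    (iSup_comp_le (fun k => MeasurableSpace.comap (fun ω => |ξ k ω - ξ (k - 1) ω|) inferInstance)
      Subtype.val C hC) ((measure_symmDiff_eq_zero_iff.1 hAB).trans hBC)
end

section
/- Let I be a finite set. Define τ_j : I^{ℤ₊} → ℕ ∪ {∞} by τ_j(x) = inf{k ≥ 0 : Σ_{i=0}^{k−1} x_{i,0} = j}, where the first coordinate x_{i,0} ∈ {−1,1}, and let E = {x ∈ I^{ℤ₊} : τ_j(x) < ∞ for all j ∈ ℤ}. Then the metric d(x,x') = Σ_{k≥0} 2^{−k} 1_{x_k ≠ x'_k} + Σ_{j∈ℤ} 2^{−|j|} (|τ_j(x) − τ_j(x')| ∧ 1) metrizes the topology of pointwise convergence on E, and (E,d) is a complete separable metric space; in particular E is Polish. -/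
open MeasureTheory Filter

/-- The sign set {−1,1} ⊂ ℤ, with its (discrete) subspace topology. -/
abbrev Sgn : Type := {z : ℤ // z = -1 ∨ z = 1}

/-- The finite alphabet I = {−1,1} × {0,1,2} × {0,1,2}. -/
abbrev Alph : Type := Sgn × Fin 3 × Fin 3

/-- τ_j(x) = inf{k ≥ 0 : Σ_{i=0}^{k−1} x_{i,0} = j} ∈ ℕ ∪ {∞}. -/
noncomputable def tau (j : ℤ) (x : ℕ → Alph) : ℕ∞ :=
  sInf {c : ℕ∞ | ∃ m : ℕ, c = (m : ℕ∞) ∧ (∑ i ∈ Finset.range m, ((x i).1 : ℤ)) = j}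

/-- E = {x ∈ I^{ℤ₊} : τ_j(x) < ∞ for all j ∈ ℤ}, with the topology of pointwise
convergence inherited from the product. -/
abbrev SceneryE : Type := {x : ℕ → Alph // ∀ j : ℤ, tau j x ≠ ⊤}

/-- The metric d(x,x') = Σ_{k≥0} 2^{−k} 1_{x_k ≠ x'_k}
+ Σ_{j∈ℤ} 2^{−|j|} (|τ_j(x) − τ_j(x')| ∧ 1). -/
noncomputable def sceneryDist (x x' : SceneryE) : ℝ :=
  (∑' k : ℕ, (2 : ℝ) ^ (-(k : ℤ)) * (if x.1 k = x'.1 k then 0 else 1)) +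
  ∑' j : ℤ, (2 : ℝ) ^ (-|j|) *
    ((((tau j x.1 - tau j x'.1) ⊔ (tau j x'.1 - tau j x.1)) ⊓ 1).toNat : ℝ)

/-! The distance is a weighted Hamming distance in the countably many discrete features
`x ↦ x k` and `x ↦ τ_j x`, with summable weights. Agreeing on the first `n` letters forces
agreement of every `τ_j` with `τ_j x < n`; since all `τ_j` are finite on `E`, small balls and
cylinders are therefore mutually nested, and `d` induces the product topology. Along a `d`-Cauchy
sequence every letter and every hitting time is eventually constant; the letterwise limit hits
level `j` at the eventual value of `τ_j`, so it lies in `E` and is the `d`-limit. Separability is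
inherited from the second-countable product. -/

open PiNat Topology TopologicalSpace

section WeightedHamming

variable {ι : Type*} {β : ι → Type*} [∀ i, DecidableEq (β i)] {w : ι → ℝ}

noncomputable def weightedHammingDist (w : ι → ℝ) (a b : ∀ i, β i) : ℝ :=
  ∑' i, w i * if a i = b i then 0 else 1

@[simp]
lemma weightedHammingDist_self (a : ∀ i, β i) : weightedHammingDist w a a = 0 := by
  simp [weightedHammingDist]

lemma weightedHammingDist_comm (a b : ∀ i, β i) :
    weightedHammingDist w a b = weightedHammingDist w b a := by
  simp only [weightedHammingDist, eq_comm]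

lemma weightedHamming_term_nonneg (hw₀ : ∀ i, 0 ≤ w i) (a b : ∀ i, β i) (i : ι) :
    0 ≤ w i * if a i = b i then 0 else 1 :=
  mul_nonneg (hw₀ i) (by split_ifs <;> norm_num)

lemma weightedHamming_term_le (hw₀ : ∀ i, 0 ≤ w i) (a b : ∀ i, β i) (i : ι) :
    (w i * if a i = b i then 0 else 1) ≤ w i := by
  split_ifs <;> simp [hw₀ i]

lemma weightedHammingDist_nonneg (hw₀ : ∀ i, 0 ≤ w i) (a b : ∀ i, β i) :
    0 ≤ weightedHammingDist w a b :=
  tsum_nonneg (weightedHamming_term_nonneg hw₀ a b)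

lemma summable_weightedHamming (hw : Summable w) (hw₀ : ∀ i, 0 ≤ w i) (a b : ∀ i, β i) :
    Summable fun i => w i * if a i = b i then 0 else 1 :=
  hw.of_nonneg_of_le (weightedHamming_term_nonneg hw₀ a b) (weightedHamming_term_le hw₀ a b)

lemma le_weightedHammingDist (hw : Summable w) (hw₀ : ∀ i, 0 ≤ w i) {a b : ∀ i, β i} {i : ι}
    (h : a i ≠ b i) : w i ≤ weightedHammingDist w a b := by
  simpa [weightedHammingDist, h] using (summable_weightedHamming hw hw₀ a b).le_tsum i
    fun j _ => weightedHamming_term_nonneg hw₀ a b j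

lemma weightedHammingDist_triangle (hw : Summable w) (hw₀ : ∀ i, 0 ≤ w i)
    (a b c : ∀ i, β i) :
    weightedHammingDist w a c ≤ weightedHammingDist w a b + weightedHammingDist w b c := by
  rw [weightedHammingDist, weightedHammingDist, weightedHammingDist,
    ← (summable_weightedHamming hw hw₀ a b).tsum_add (summable_weightedHamming hw hw₀ b c)]
  refine (summable_weightedHamming hw hw₀ a c).tsum_le_tsum (fun i => ?_)
    ((summable_weightedHamming hw hw₀ a b).add (summable_weightedHamming hw hw₀ b c))
  rw [← mul_add]
  gcongr
  · exact hw₀ i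
  · split_ifs <;> simp_all

lemma exists_finset_weightedHammingDist_lt (hw : Summable w) (hw₀ : ∀ i, 0 ≤ w i) {ε : ℝ}
    (hε : 0 < ε) :
    ∃ s : Finset ι, ∀ a b : ∀ i, β i, (∀ i ∈ s, a i = b i) → weightedHammingDist w a b < ε := by
  obtain ⟨s, hs⟩ := ((tendsto_order.1 (tendsto_tsum_compl_atTop_zero w)).2 ε hε).exists
  refine ⟨s, fun a b hab => lt_of_le_of_lt ?_ hs⟩
  have hsupp : Function.support (fun i => w i * if a i = b i then 0 else 1) ⊆ {i | i ∉ s} :=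
    fun i hi his => hi (by simp [hab i his])
  rw [weightedHammingDist, ← tsum_subtype_eq_of_support_subset hsupp]
  exact ((summable_weightedHamming hw hw₀ a b).subtype _).tsum_le_tsum
    (fun i => weightedHamming_term_le hw₀ a b i) (hw.subtype _)

end WeightedHamming

lemma summable_two_zpow_neg_natCast : Summable fun k : ℕ => (2 : ℝ) ^ (-(k : ℤ)) := by
  simpa [zpow_neg, zpow_natCast, ← inv_pow] using summable_geometric_two

lemma summable_two_zpow_neg_abs : Summable fun j : ℤ => (2 : ℝ) ^ (-|j|) :=
  .of_nat_of_neg (by simpa using summable_two_zpow_neg_natCast)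
    (by simpa using summable_two_zpow_neg_natCast)

lemma ENat.toNat_tsub_sup_tsub_inf_one (a b : ℕ∞) :
    (((a - b) ⊔ (b - a)) ⊓ 1).toNat = if a = b then 0 else 1 := by
  rcases lt_trichotomy a b with h | rfl | h
  · simp [h.ne, (tsub_pos_of_lt h).ne', Order.one_le_iff_ne_zero]
  · simp
  · simp [h.ne', (tsub_pos_of_lt h).ne', Order.one_le_iff_ne_zero]

namespace PiNat

variable {E : ℕ → Type*} [∀ n, TopologicalSpace (E n)] [∀ n, DiscreteTopology (E n)]

lemma mem_nhds_iff_exists_cylinder_subset {x : ∀ n, E n} {s : Set (∀ n, E n)} :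
    s ∈ 𝓝 x ↔ ∃ n, cylinder x n ⊆ s := by
  refine ⟨fun h => ?_, fun ⟨n, hn⟩ => mem_of_superset
    ((isOpen_cylinder E x n).mem_nhds (self_mem_cylinder x n)) hn⟩
  obtain ⟨_, ⟨y, n, rfl⟩, hx, hs⟩ := (isTopologicalBasis_cylinders E).mem_nhds_iff.1 h
  exact ⟨n, mem_cylinder_iff_eq.1 hx ▸ hs⟩

lemma isOpen_subtype_iff_exists_cylinder {p : (∀ n, E n) → Prop} {s : Set (Subtype p)} :
    IsOpen s ↔ ∀ x ∈ s, ∃ n, Subtype.val ⁻¹' cylinder x.1 n ⊆ s := by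
  rw [isOpen_iff_mem_nhds]
  refine forall₂_congr fun x _ => ?_
  rw [nhds_induced, mem_comap]
  refine ⟨?_, fun ⟨n, hn⟩ => ⟨_, mem_nhds_iff_exists_cylinder_subset.2 ⟨n, subset_rfl⟩, hn⟩⟩
  rintro ⟨u, hu, hus⟩
  obtain ⟨n, hnu⟩ := mem_nhds_iff_exists_cylinder_subset.1 hu
  exact ⟨n, (Set.preimage_mono hnu).trans hus⟩

end PiNat

lemma CauchySeq.exists_eventually_eq {X Y : Type*} [PseudoMetricSpace X] {u : ℕ → X}
    (hu : CauchySeq u) {g : X → Y} {δ : ℝ} (hδ : 0 < δ) (hg : ∀ x y, dist x y < δ → g x = g y) :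
    ∃ c, ∀ᶠ n in atTop, g (u n) = c := by
  obtain ⟨N, hN⟩ := Metric.cauchySeq_iff'.1 hu δ hδ
  exact ⟨g (u N), eventually_atTop.2 ⟨N, fun n hn => hg _ _ (hN n hn)⟩⟩

lemma tau_eq_coe_iff {j : ℤ} {x : ℕ → Alph} {m : ℕ} :
    tau j x = m ↔ (∑ i ∈ Finset.range m, ((x i).1 : ℤ)) = j ∧
      ∀ n < m, (∑ i ∈ Finset.range n, ((x i).1 : ℤ)) ≠ j := by
  constructor
  · intro h
    have hne : {c : ℕ∞ | ∃ n : ℕ, c = n ∧ (∑ i ∈ Finset.range n, ((x i).1 : ℤ)) = j}.Nonempty :=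
      Set.nonempty_iff_ne_empty.2 fun he => by simp [tau, he] at h
    obtain ⟨n, hn, hsum⟩ := csInf_mem hne
    rw [← tau, h, Nat.cast_inj] at hn
    refine ⟨hn ▸ hsum, fun k hk hk' => ?_⟩
    have : tau j x ≤ k := sInf_le ⟨k, rfl, hk'⟩
    rw [h, Nat.cast_le] at this
    omega
  · rintro ⟨hm, hmin⟩
    refine le_antisymm (sInf_le ⟨m, rfl, hm⟩) (le_sInf ?_)
    rintro _ ⟨n, rfl, hn⟩
    exact Nat.cast_le.2 (not_lt.1 fun h => hmin n h hn)

lemma tau_eq_of_mem_cylinder {j : ℤ} {x y : ℕ → Alph} {m : ℕ} (hx : tau j x = m)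
    (hy : y ∈ cylinder x m) : tau j y = m := by
  have hsum : ∀ n ≤ m,
      ∑ i ∈ Finset.range n, ((y i).1 : ℤ) = ∑ i ∈ Finset.range n, ((x i).1 : ℤ) :=
    fun n hn => Finset.sum_congr rfl fun i hi => by
      rw [hy i ((Finset.mem_range.1 hi).trans_le hn)]
  rw [tau_eq_coe_iff] at hx ⊢
  exact ⟨hsum m le_rfl ▸ hx.1, fun n hn => hsum n hn.le ▸ hx.2 n hn⟩

lemma sceneryDist_eq (x y : SceneryE) :
    sceneryDist x y = weightedHammingDist (fun k : ℕ => (2 : ℝ) ^ (-(k : ℤ))) x.1 y.1 +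
      weightedHammingDist (fun j : ℤ => (2 : ℝ) ^ (-|j|)) (fun j => tau j x.1)
        (fun j => tau j y.1) := by
  simp only [sceneryDist, weightedHammingDist, ENat.toNat_tsub_sup_tsub_inf_one, Nat.cast_ite,
    Nat.cast_zero, Nat.cast_one]

lemma sceneryDist_self (x : SceneryE) : sceneryDist x x = 0 := by
  simp [sceneryDist_eq]

lemma sceneryDist_comm (x y : SceneryE) : sceneryDist x y = sceneryDist y x := by
  rw [sceneryDist_eq, sceneryDist_eq, weightedHammingDist_comm x.1,
    weightedHammingDist_comm fun j => tau j x.1]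

lemma sceneryDist_triangle (x y z : SceneryE) :
    sceneryDist x z ≤ sceneryDist x y + sceneryDist y z := by
  simp only [sceneryDist_eq]
  linarith [weightedHammingDist_triangle summable_two_zpow_neg_natCast (fun _ => by positivity)
      x.1 y.1 z.1,
    weightedHammingDist_triangle summable_two_zpow_neg_abs (fun _ => by positivity)
      (fun j => tau j x.1) (fun j => tau j y.1) (fun j => tau j z.1)]

lemma coord_eq_of_sceneryDist_lt {x y : SceneryE} {k : ℕ}
    (h : sceneryDist x y < 2 ^ (-(k : ℤ))) : x.1 k = y.1 k := by
  by_contra hk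
  rw [sceneryDist_eq] at h
  linarith [le_weightedHammingDist summable_two_zpow_neg_natCast (fun _ => by positivity) hk,
    weightedHammingDist_nonneg (w := fun j : ℤ => (2 : ℝ) ^ (-|j|)) (fun _ => by positivity)
      (fun j => tau j x.1) (fun j => tau j y.1)]

lemma tau_eq_of_sceneryDist_lt {x y : SceneryE} {j : ℤ}
    (h : sceneryDist x y < 2 ^ (-|j|)) : tau j x.1 = tau j y.1 := by
  by_contra hj
  rw [sceneryDist_eq] at h
  linarith [le_weightedHammingDist summable_two_zpow_neg_abs (fun _ => by positivity)
      (a := fun j => tau j x.1) (b := fun j => tau j y.1) hj,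
    weightedHammingDist_nonneg (w := fun k : ℕ => (2 : ℝ) ^ (-(k : ℤ))) (fun _ => by positivity)
      x.1 y.1]

lemma eq_of_sceneryDist_eq_zero {x y : SceneryE} (h : sceneryDist x y = 0) : x = y :=
  Subtype.ext <| funext fun _ => coord_eq_of_sceneryDist_lt (h ▸ zpow_pos two_pos _)

lemma mem_cylinder_of_sceneryDist_lt {x y : SceneryE} {n : ℕ}
    (h : sceneryDist x y < 2 ^ (-(n : ℤ))) : y.1 ∈ cylinder x.1 n := fun i hi =>
  (coord_eq_of_sceneryDist_lt (h.trans_le (zpow_le_zpow_right₀ one_le_two (by omega)))).symm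

lemma exists_cylinder_sceneryDist_lt (x : SceneryE) {ε : ℝ} (hε : 0 < ε) :
    ∃ n, ∀ y : SceneryE, y.1 ∈ cylinder x.1 n → sceneryDist x y < ε := by
  obtain ⟨s, hs⟩ := exists_finset_weightedHammingDist_lt (β := fun _ => Alph)
    summable_two_zpow_neg_natCast (fun _ => by positivity) (half_pos hε)
  obtain ⟨t, ht⟩ := exists_finset_weightedHammingDist_lt (β := fun _ => ℕ∞)
    summable_two_zpow_neg_abs (fun _ => by positivity) (half_pos hε)
  obtain ⟨n₁, hn₁⟩ := s.exists_nat_subset_range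
  obtain ⟨n₂, hn₂⟩ := (t.image fun j => (tau j x.1).toNat).exists_nat_subset_range
  refine ⟨max n₁ n₂, fun y hy => ?_⟩
  have hcoord : ∀ k ∈ s, x.1 k = y.1 k := fun k hk =>
    (hy k ((Finset.mem_range.1 (hn₁ hk)).trans_le (le_max_left _ _))).symm
  have htau : ∀ j ∈ t, tau j x.1 = tau j y.1 := fun j hj => by
    have hx : tau j x.1 = (tau j x.1).toNat := (ENat.natCast_toNat (x.2 j)).symm
    have hlt : (tau j x.1).toNat < max n₁ n₂ :=
      (Finset.mem_range.1 (hn₂ (Finset.mem_image_of_mem _ hj))).trans_le (le_max_right _ _)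
    exact hx.trans (tau_eq_of_mem_cylinder hx (cylinder_anti _ hlt.le hy)).symm
  rw [sceneryDist_eq]
  linarith [hs _ _ hcoord, ht _ _ htau]

lemma isOpen_iff_sceneryDist (s : Set SceneryE) :
    IsOpen s ↔ ∀ x ∈ s, ∃ ε > 0, ∀ y, sceneryDist x y < ε → y ∈ s := by
  rw [isOpen_subtype_iff_exists_cylinder]
  refine forall₂_congr fun x _ => ⟨fun ⟨n, hn⟩ => ⟨_, zpow_pos two_pos (-(n : ℤ)),
    fun y hy => hn (mem_cylinder_of_sceneryDist_lt hy)⟩, fun ⟨ε, hε, hball⟩ => ?_⟩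
  obtain ⟨n, hn⟩ := exists_cylinder_sceneryDist_lt x hε
  exact ⟨n, fun y hy => hball y (hn y hy)⟩

noncomputable abbrev sceneryMetric : MetricSpace SceneryE :=
  .ofDistTopology sceneryDist sceneryDist_self sceneryDist_comm sceneryDist_triangle
    isOpen_iff_sceneryDist fun _ _ => eq_of_sceneryDist_eq_zero

lemma completeSpace_sceneryMetric : @CompleteSpace SceneryE sceneryMetric.toUniformSpace := by
  let := sceneryMetric
  refine Metric.complete_of_cauchySeq_tendsto fun u hu => ?_
  choose x hx using fun k => hu.exists_eventually_eq (g := fun y : SceneryE => y.1 k)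
    (zpow_pos two_pos (-(k : ℤ))) fun _ _ => coord_eq_of_sceneryDist_lt
  have hcyl : ∀ n, ∀ᶠ i in atTop, (u i).1 ∈ cylinder x n := fun n =>
    ((eventually_all_finite (Set.finite_lt_nat n)).2 fun k _ => hx k).mono
      fun i hi k hk => hi k hk
  have hx_mem : ∀ j, tau j x ≠ ⊤ := fun j => by
    obtain ⟨c, hc⟩ := hu.exists_eventually_eq (g := fun y : SceneryE => tau j y.1)
      (zpow_pos two_pos (-|j|)) fun _ _ => tau_eq_of_sceneryDist_lt
    obtain ⟨i, hci, hi⟩ := (hc.and (hcyl c.toNat)).exists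
    have hc_ne_top : c ≠ ⊤ := hci ▸ (u i).2 j
    rw [tau_eq_of_mem_cylinder (hci.trans (ENat.natCast_toNat hc_ne_top).symm)
      ((mem_cylinder_comm _ _ _).1 hi)]
    exact ENat.natCast_ne_top _
  refine ⟨⟨x, hx_mem⟩, Metric.tendsto_nhds.2 fun ε hε => ?_⟩
  obtain ⟨n, hn⟩ := exists_cylinder_sceneryDist_lt ⟨x, hx_mem⟩ hε
  exact (hcyl n).mono fun i hi => by
    rw [dist_comm]
    exact hn (u i) hi

/-- the metric d metrizes the topology of pointwise convergence on E,
and (E,d) is a complete separable metric space; in particular E is Polish. -/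
theorem stmt5 :
    (∃ m : MetricSpace SceneryE,
      (∀ x x' : SceneryE, m.dist x x' = sceneryDist x x') ∧
      m.toUniformSpace.toTopologicalSpace
        = (instTopologicalSpaceSubtype : TopologicalSpace SceneryE) ∧
      @CompleteSpace SceneryE m.toUniformSpace) ∧
    TopologicalSpace.SeparableSpace SceneryE ∧
    PolishSpace SceneryE := by
  have := secondCountableTopology_induced SceneryE (ℕ → Alph) Subtype.val
  have : IsCompletelyMetrizableSpace SceneryE :=
    ⟨⟨sceneryMetric, rfl, completeSpace_sceneryMetric⟩⟩
  exact ⟨⟨sceneryMetric, fun _ _ => rfl, rfl, completeSpace_sceneryMetric⟩, inferInstance,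
    inferInstance⟩
end

section
/- On a Polish space S, the class of functions F : P(S) → ℝ of the form F(ν) = κ(∫f₁ dν, ..., ∫f_p dν), where p ∈ ℕ, f₁,...,f_p are bounded measurable functions on S, and κ : ℝ^p → ℝ is convex, is measure-determining on the space P(S) of Borel probability measures: if two Borel probability measures m, m' on P(S) satisfy ∫F dm = ∫F dm' for all such F, then m = m'. -/
/-!
A Borel probability measure `m` on `P(S)` is determined by the laws under `m` of the finite
vectors `ν ↦ (ν(s₁), …, ν(sₖ))`, since these cylinder functions generate the σ-algebra of `P(S)`.
Each such law lives on the compact cube `[0,1]ᵏ`, where the exponentials `y ↦ exp ⟨a, y⟩` span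
a point-separating subalgebra of `C([0,1]ᵏ, ℝ)`; by Stone–Weierstrass they determine finite
measures there. Finally `exp ⟨a, (ν(sᵢ))ᵢ⟩ = κ (∫ f dν)` with the convex `κ = exp` and the bounded
measurable `f = ∑ aᵢ 1_{sᵢ}`.
-/

open MeasureTheory

namespace MeasureTheory

variable {E : Type*} [TopologicalSpace E] [CompactSpace E] [MeasurableSpace E] [BorelSpace E]

noncomputable def integralContinuousMapCLM (μ : Measure E) [IsFiniteMeasure μ] :
    C(E, ℝ) →L[ℝ] ℝ :=
  L1.integralCLM.comp (ContinuousMap.toLp 1 μ ℝ)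

theorem integralContinuousMapCLM_apply (μ : Measure E) [IsFiniteMeasure μ] (g : C(E, ℝ)) :
    integralContinuousMapCLM μ g = ∫ x, g x ∂μ := by
  rw [integralContinuousMapCLM, ContinuousLinearMap.comp_apply, ← L1.integral_eq,
    L1.integral_eq_integral]
  exact integral_congr_ae (ContinuousMap.coeFn_toLp μ g)

theorem ext_of_forall_mem_submonoid_integral_eq [TopologicalSpace.PseudoMetrizableSpace E]
    {P P' : Measure E} [IsFiniteMeasure P] [IsFiniteMeasure P'] (M : Submonoid C(E, ℝ))
    (hM : (Algebra.adjoin ℝ (M : Set C(E, ℝ))).SeparatesPoints)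
    (h : ∀ g ∈ M, ∫ x, g x ∂P = ∫ x, g x ∂P') : P = P' := by
  have hdense : Dense (Submodule.span ℝ (M : Set C(E, ℝ)) : Set C(E, ℝ)) := by
    rw [← Submonoid.closure_eq M, ← Algebra.adjoin_eq_span, Subalgebra.coe_toSubmodule, dense_iff_closure_eq, ← Subalgebra.topologicalClosure_coe,
      ContinuousMap.subalgebra_topologicalClosure_eq_top_of_separatesPoints _ hM,
      Algebra.coe_top]
  have hCLM : integralContinuousMapCLM P = integralContinuousMapCLM P' :=
    ContinuousLinearMap.ext_on hdense fun g hg => by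
      simp only [integralContinuousMapCLM_apply, h g hg]
  refine ext_of_forall_integral_eq_of_IsFiniteMeasure fun f => ?_
  simpa only [integralContinuousMapCLM_apply, BoundedContinuousFunction.coe_toContinuousMap] using
    congrArg (· f.toContinuousMap) hCLM

section Cube

open unitInterval

variable {ι : Type*} [Fintype ι]

noncomputable def expSum : Multiplicative (ι → ℝ) →* C(ι → I, ℝ) where
  toFun a := ⟨fun y => Real.exp (∑ i, a.toAdd i * y i), by fun_prop⟩
  map_one' := by ext; simp
  map_mul' a b := by ext; simp [add_mul, Finset.sum_add_distrib, Real.exp_add]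

theorem expSum_apply (a : ι → ℝ) (y : ι → I) :
    expSum (Multiplicative.ofAdd a) y = Real.exp (∑ i, a i * y i) := rfl

theorem separatesPoints_adjoin_range_expSum :
    (Algebra.adjoin ℝ (MonoidHom.mrange (expSum (ι := ι)) : Set C(ι → I, ℝ))).SeparatesPoints := by
  classical
  intro y y' hne
  obtain ⟨i, hi⟩ := Function.ne_iff.mp hne
  refine ⟨_, ⟨_, Algebra.subset_adjoin ⟨Multiplicative.ofAdd (Pi.single i 1), rfl⟩, rfl⟩, ?_⟩
  simpa [expSum_apply, Pi.single_apply, Subtype.coe_inj] using hi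

theorem ext_of_forall_integral_exp_sum_eq {P P' : Measure (ι → I)} [IsFiniteMeasure P]
    [IsFiniteMeasure P'] (h : ∀ a : ι → ℝ, ∫ y, Real.exp (∑ i, a i * y i) ∂P =
      ∫ y, Real.exp (∑ i, a i * y i) ∂P') : P = P' :=
  ext_of_forall_mem_submonoid_integral_eq _ separatesPoints_adjoin_range_expSum <| by
    rintro _ ⟨a, rfl⟩
    exact h a.toAdd

end Cube

namespace Measure

variable {S : Type*} [MeasurableSpace S]

theorem measurableSpace_eq_comap_pi :
    (instMeasurableSpace : MeasurableSpace (Measure S)) =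
      MeasurableSpace.comap (fun ν (s : {s : Set S // MeasurableSet s}) => ν s)
        MeasurableSpace.pi := by
  rw [MeasurableSpace.pi, MeasurableSpace.comap_iSup]
  simp only [MeasurableSpace.comap_comp]
  exact iSup_subtype'

theorem ext_of_forall_map_eq {m m' : Measure (Measure S)} [IsFiniteMeasure m]
    [IsFiniteMeasure m']
    (h : ∀ I : Finset {s : Set S // MeasurableSet s},
      m.map (fun ν (s : I) => ν s) = m'.map (fun ν (s : I) => ν s)) : m = m' := by
  set Φ : Measure S → ({s : Set S // MeasurableSet s} → ENNReal) := fun ν s => ν s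
  have hΦ : Measurable Φ := measurable_pi_lambda _ fun s => measurable_coe s.2
  have hmap : m.map Φ = m'.map Φ := by
    refine IsProjectiveLimit.unique (P := fun I => (m.map Φ).map I.restrict) (fun _ => rfl)
      fun I => ?_
    dsimp only
    rw [Measure.map_map (Finset.measurable_restrict I) hΦ,
      Measure.map_map (Finset.measurable_restrict I) hΦ]
    exact (h I).symm
  ext E hE
  rw [measurableSpace_eq_comap_pi] at hE
  obtain ⟨B, hB, rfl⟩ := hE
  rw [← Measure.map_apply hΦ hB, hmap, Measure.map_apply hΦ hB]

end Measure

section FiniteDimensionalLaws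

open unitInterval

variable {S : Type*} [MeasurableSpace S] {ι : Type*} {s : ι → Set S}

/-- The clamp to `[0,1]` only matters off probability measures; it makes the map land in a
compact cube. -/
noncomputable def clampedEval (s : ι → Set S) (ν : Measure S) : ι → I :=
  fun i => Set.projIcc 0 1 zero_le_one (ν.real (s i))

theorem measurable_clampedEval (hs : ∀ i, MeasurableSet (s i)) :
    Measurable (clampedEval s) :=
  measurable_pi_lambda _ fun i =>
    continuous_projIcc.measurable.comp (Measure.measurable_coe (hs i)).ennreal_toReal

theorem coe_clampedEval (ν : Measure S) [IsProbabilityMeasure ν] (i : ι) :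
    (clampedEval s ν i : ℝ) = ν.real (s i) := by
  rw [clampedEval, Set.projIcc_of_mem _ ⟨measureReal_nonneg, measureReal_le_one⟩]

theorem map_eval_eq_of_integral_exp_eq [Fintype ι] (hs : ∀ i, MeasurableSet (s i))
    {m m' : Measure (Measure S)} [IsFiniteMeasure m] [IsFiniteMeasure m']
    (hm : ∀ᵐ ν ∂m, IsProbabilityMeasure ν) (hm' : ∀ᵐ ν ∂m', IsProbabilityMeasure ν)
    (h : ∀ a : ι → ℝ, ∫ ν, Real.exp (∑ i, a i * ν.real (s i)) ∂m =
      ∫ ν, Real.exp (∑ i, a i * ν.real (s i)) ∂m') :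
    m.map (fun ν i => ν (s i)) = m'.map (fun ν i => ν (s i)) := by
  have hX := measurable_clampedEval hs
  have hlaw : ∀ μ : Measure (Measure S), (∀ᵐ ν ∂μ, IsProbabilityMeasure ν) →
      μ.map (fun ν i => ν (s i)) =
        (μ.map (clampedEval s)).map (fun y i => ENNReal.ofReal (y i)) := fun μ hμ => by
    rw [Measure.map_map (by fun_prop) hX]
    refine Measure.map_congr (hμ.mono fun ν hν => funext fun i => ?_)
    simp [coe_clampedEval]
  have hexp : ∀ μ : Measure (Measure S), (∀ᵐ ν ∂μ, IsProbabilityMeasure ν) → ∀ a : ι → ℝ,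
      ∫ y, Real.exp (∑ i, a i * y i) ∂(μ.map (clampedEval s)) =
        ∫ ν, Real.exp (∑ i, a i * ν.real (s i)) ∂μ := fun μ hμ a => by
    rw [integral_map hX.aemeasurable
      (by fun_prop : Continuous fun y : ι → I => Real.exp (∑ i, a i * y i)).aestronglyMeasurable]
    exact integral_congr_ae (hμ.mono fun ν hν => by simp [coe_clampedEval])
  have hcube : m.map (clampedEval s) = m'.map (clampedEval s) :=
    ext_of_forall_integral_exp_sum_eq fun a => by rw [hexp m hm, hexp m' hm', h a]
  rw [hlaw m hm, hlaw m' hm', hcube]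

end FiniteDimensionalLaws

section IndicatorSums

variable {S ι : Type*} [Fintype ι] (a : ι → ℝ) (s : ι → Set S)

theorem abs_sum_mul_indicator_one_le (x : S) :
    |∑ i, a i * (s i).indicator 1 x| ≤ ∑ i, |a i| := by
  refine (Finset.abs_sum_le_sum_abs _ _).trans (Finset.sum_le_sum fun i _ => ?_)
  by_cases hx : x ∈ s i <;> simp [hx]

theorem integral_sum_mul_indicator_one [MeasurableSpace S] (μ : Measure S) [IsFiniteMeasure μ]
    (hs : ∀ i, MeasurableSet (s i)) :
    ∫ x, ∑ i, a i * (s i).indicator 1 x ∂μ = ∑ i, a i * μ.real (s i) := by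
  rw [integral_finsetSum _ fun i _ => ?_]
  · simp only [integral_const_mul, integral_indicator_one (hs _)]
  · exact ((integrable_indicator_iff (hs i)).2 (integrable_const 1).integrableOn).const_mul (a i)

end IndicatorSums

end MeasureTheory

theorem stmt14_general {S : Type*} [MeasurableSpace S]
    (m m' : Measure (Measure S)) [IsProbabilityMeasure m] [IsProbabilityMeasure m']
    (hm : ∀ᵐ ν ∂m, IsProbabilityMeasure ν) (hm' : ∀ᵐ ν ∂m', IsProbabilityMeasure ν)
    (h : ∀ (p : ℕ) (f : Fin p → S → ℝ),
      (∀ i, Measurable (f i)) → (∀ i, ∃ C, ∀ x, |f i x| ≤ C) →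
      ∀ κ : (Fin p → ℝ) → ℝ, ConvexOn ℝ Set.univ κ →
        ∫ ν, κ (fun i => ∫ x, f i x ∂ν) ∂m = ∫ ν, κ (fun i => ∫ x, f i x ∂ν) ∂m') :
    m = m' := by
  refine Measure.ext_of_forall_map_eq fun J => ?_
  have hs : ∀ s : J, MeasurableSet (s : Set S) := fun s => s.1.2
  refine map_eval_eq_of_integral_exp_eq hs hm hm' fun a => ?_
  have hf := h 1 (fun _ x => ∑ s : J, a s * (s : Set S).indicator 1 x)
    (fun _ => Finset.measurable_sum _ fun s _ => (measurable_const.indicator (hs s)).const_mul _)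
    (fun _ => ⟨_, abs_sum_mul_indicator_one_le a _⟩)
    (fun y => Real.exp (y 0))
    (convexOn_exp.comp_linearMap (LinearMap.proj (R := ℝ) (φ := fun _ : Fin 1 => ℝ) 0))
  have hint : ∀ μ : Measure (Measure S), (∀ᵐ ν ∂μ, IsProbabilityMeasure ν) →
      ∫ ν, Real.exp (∫ x, ∑ s : J, a s * (s : Set S).indicator 1 x ∂ν) ∂μ =
        ∫ ν, Real.exp (∑ s : J, a s * ν.real s) ∂μ := fun μ hμ =>
    integral_congr_ae (hμ.mono fun ν hν => by
      simp only [integral_sum_mul_indicator_one a _ ν hs])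
  rwa [hint m hm, hint m' hm'] at hf

/-- on a Polish space S, functions F(ν) = κ(∫f₁dν,…,∫f_p dν) with the
f_i bounded measurable and κ convex are measure-determining on P(S): if two Borel
probability measures m, m' on P(S) integrate all such F equally, then m = m'. -/
theorem stmt14 {S : Type*} [MeasurableSpace S] [TopologicalSpace S] [PolishSpace S]
    [BorelSpace S]
    (m m' : Measure (Measure S)) [IsProbabilityMeasure m] [IsProbabilityMeasure m']
    (hm : ∀ᵐ ν ∂m, IsProbabilityMeasure ν) (hm' : ∀ᵐ ν ∂m', IsProbabilityMeasure ν)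
    (h : ∀ (p : ℕ) (f : Fin p → S → ℝ),
      (∀ i, Measurable (f i)) → (∀ i, ∃ C, ∀ x, |f i x| ≤ C) →
      ∀ κ : (Fin p → ℝ) → ℝ, ConvexOn ℝ Set.univ κ →
        ∫ ν, κ (fun i => ∫ x, f i x ∂ν) ∂m = ∫ ν, κ (fun i => ∫ x, f i x ∂ν) ∂m') :
    m = m' :=
  stmt14_general m m' hm hm' h
end
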